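/- arXiv:2009.02272 — 2 statements merged into one kernel-verified Lean document; each statement's English description precedes it below -/
import Mathlib

section
/- For every natural number n, p^B_{n,0}(x) = B_n(x); equivalently, p^B_{n,0}(x) = (1−x)^{n+1} · Σ_{m≥0} (2m+1)^n x^m in ℝ⟦x⟧. -/
open Polynomial PowerSeries

/-- The polynomials `p^B_{n,k}` defined recursively as in
Proposition (e): `p^B_{0,0} = 1`, `p^B_{0,1} = x`,
`p^B_{n+1,0} = ∑_{i=0}^{n+1} p^B_{n,i}`,
`p^B_{n+1,k} = 2x ∑_{i=0}^{k-1} p^B_{n,i} + 2 ∑_{i=k}^{n+1} p^B_{n,i}` for `1 ≤ k ≤ n+1`, and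
`p^B_{n+1,n+2} = x ∑_{i=0}^{n+1} p^B_{n,i}`. -/
noncomputable def pB : ℕ → ℕ → Polynomial ℝ
  | 0, 0 => 1
  | 0, 1 => Polynomial.X
  | 0, _ + 2 => 0
  | n + 1, 0 => ∑ i ∈ Finset.range (n + 2), pB n i
  | n + 1, k + 1 =>
      if k + 1 ≤ n + 1 then
        2 * Polynomial.X * (∑ i ∈ Finset.range (k + 1), pB n i) +
          2 * ∑ i ∈ Finset.Icc (k + 1) (n + 1), pB n i
      else if k + 1 = n + 2 then
        Polynomial.X * ∑ i ∈ Finset.range (n + 2), pB n i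
      else 0
  termination_by n _ => n

/-! Write `E n j = oddPowSeries n j = ∑ₘ (2m+1)^(n-j) (2m-1)^j xᵐ`. By induction on `n`, for
`k ≤ n` one has `p^B_{n,k} = (1-x)^{n+1} (E n (k-1) + E n k)` (just `(1-x)^{n+1} E n 0` for
`k = 0`), while `p^B_{n,n+1} = x p^B_{n,0}`. The recursion only sees the partial sums
`∑_{i ≤ j} p^B_{n,i}`, which telescope because
`(2m+1)^{a+1}(2m-1)^b - (2m+1)^a(2m-1)^{b+1} = 2(2m+1)^a(2m-1)^b`; multiplying by `1-x` mixes the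
coefficients at `m` and `m-1`, and these are linked through `2(m-1)+1 = 2m-1`, i.e.
`x E n 0 = E n n - (-1)^n`. -/

@[norm_cast]
lemma Polynomial.coe_finset_sum {R ι : Type*} [Semiring R] (s : Finset ι) (f : ι → R[X]) :
    ((∑ i ∈ s, f i : R[X]) : R⟦X⟧) = ∑ i ∈ s, (f i : R⟦X⟧) :=
  map_sum Polynomial.coeToPowerSeries.ringHom f s

@[norm_cast]
lemma Polynomial.coe_ofNat {R : Type*} [Semiring R] (m : ℕ) [m.AtLeastTwo] :
    ((ofNat(m) : R[X]) : R⟦X⟧) = ofNat(m) :=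
  map_ofNat Polynomial.coeToPowerSeries.ringHom m

noncomputable def oddPowSeries (n j : ℕ) : ℝ⟦X⟧ :=
  PowerSeries.mk fun m => (2 * m + 1 : ℝ) ^ (n - j) * (2 * m - 1) ^ j

lemma oddPowSeries_succ_sub_succ {n j : ℕ} (hj : j ≤ n) :
    oddPowSeries (n + 1) j - oddPowSeries (n + 1) (j + 1) = 2 * oddPowSeries n j := by
  obtain ⟨a, rfl⟩ := Nat.exists_eq_add_of_le hj
  rw [← map_ofNat (PowerSeries.C (R := ℝ)) 2]
  ext m
  simp only [oddPowSeries, map_sub, coeff_mk, PowerSeries.coeff_C_mul,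
    show j + a + 1 - j = a + 1 by omega, show j + a + 1 - (j + 1) = a by omega,
    Nat.add_sub_cancel_left]
  ring

lemma X_mul_oddPowSeries_zero (n : ℕ) :
    PowerSeries.X * oddPowSeries n 0 = oddPowSeries n n - (-1) ^ n := by
  rw [show (-1 : ℝ⟦X⟧) ^ n = PowerSeries.C ((-1) ^ n) by simp]
  ext (_ | m)
  · simp [oddPowSeries]
  · simp only [oddPowSeries, map_sub, coeff_succ_X_mul, coeff_mk, PowerSeries.coeff_C,
      Nat.succ_ne_zero, if_false, Nat.sub_zero, Nat.sub_self, pow_zero, mul_one, one_mul, sub_zero]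
    push_cast
    ring

noncomputable def pBSeries : ℕ → ℕ → ℝ⟦X⟧
  | n, 0 => oddPowSeries n 0
  | n, j + 1 => oddPowSeries n j + oddPowSeries n (j + 1)

lemma sum_range_pBSeries {n j : ℕ} (hj : j ≤ n) :
    ∑ i ∈ Finset.range (j + 1), pBSeries n i =
      oddPowSeries (n + 1) 0 - oddPowSeries (n + 1) (j + 1) - oddPowSeries n j := by
  induction j with
  | zero =>
    rw [Finset.sum_range_one, pBSeries]
    linear_combination -oddPowSeries_succ_sub_succ (Nat.zero_le n)
  | succ j ih =>
    rw [Finset.sum_range_succ, ih (by omega), pBSeries]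
    linear_combination -oddPowSeries_succ_sub_succ hj

lemma sum_range_pBSeries_add_X_mul (n : ℕ) :
    ∑ i ∈ Finset.range (n + 1), pBSeries n i + PowerSeries.X * pBSeries n 0 =
      (1 - PowerSeries.X) * oddPowSeries (n + 1) 0 := by
  rw [sum_range_pBSeries le_rfl, pBSeries]
  linear_combination X_mul_oddPowSeries_zero n + X_mul_oddPowSeries_zero (n + 1)

lemma pB_succ_zero (n : ℕ) : pB (n + 1) 0 = ∑ i ∈ Finset.range (n + 2), pB n i := by
  rw [pB]

lemma pB_top_eq_X_mul (n : ℕ) : pB n (n + 1) = Polynomial.X * pB n 0 := by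
  cases n with
  | zero => simp [pB]
  | succ n => rw [pB.eq_5, if_neg (by omega), if_pos rfl, pB_succ_zero]

lemma pB_succ_succ {n j : ℕ} (hj : j ≤ n) :
    pB (n + 1) (j + 1) =
      2 * pB (n + 1) 0 - 2 * (1 - Polynomial.X) * ∑ i ∈ Finset.range (j + 1), pB n i := by
  rw [pB.eq_5, if_pos (by omega), pB_succ_zero, ← Finset.Ico_add_one_right_eq_Icc,
    show n + 1 + 1 = n + 2 from rfl,
    ← Finset.sum_range_add_sum_Ico _ (by omega : j + 1 ≤ n + 2)]
  ring

lemma coe_pB_eq_one_sub_X_pow_mul {n k : ℕ} (hk : k ≤ n) :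
    (pB n k : ℝ⟦X⟧) = (1 - PowerSeries.X) ^ (n + 1) * pBSeries n k := by
  induction n generalizing k with
  | zero =>
    obtain rfl : k = 0 := by omega
    rw [pB, Polynomial.coe_one, pBSeries]
    linear_combination X_mul_oddPowSeries_zero 0
  | succ n ih =>
    have hsum {j : ℕ} (hj : j ≤ n) : ∑ i ∈ Finset.range (j + 1), (pB n i : ℝ⟦X⟧) =
        (1 - PowerSeries.X) ^ (n + 1) * ∑ i ∈ Finset.range (j + 1), pBSeries n i := by
      rw [Finset.mul_sum]
      exact Finset.sum_congr rfl fun i hi => ih (by rw [Finset.mem_range] at hi; omega)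
    have hzero : (pB (n + 1) 0 : ℝ⟦X⟧) =
        (1 - PowerSeries.X) ^ (n + 1 + 1) * oddPowSeries (n + 1) 0 := by
      rw [pB_succ_zero, Finset.sum_range_succ, pB_top_eq_X_mul]
      push_cast
      rw [hsum le_rfl, ih (Nat.zero_le n)]
      linear_combination (1 - PowerSeries.X) ^ (n + 1) * sum_range_pBSeries_add_X_mul n
    rcases k with _ | j
    · exact hzero
    · rw [pB_succ_succ (by omega)]
      push_cast
      rw [hzero, hsum (by omega), sum_range_pBSeries (by omega), pBSeries]
      linear_combination
        -(1 - PowerSeries.X) ^ (n + 1 + 1) * oddPowSeries_succ_sub_succ (show j ≤ n by omega)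

/-- `p^B_{n,0}(x) = B_n(x)`, i.e. `p^B_{n,0}(x) = (1-x)^{n+1} ⬝ ∑_{m ≥ 0} (2m+1)^n x^m`
in `ℝ⟦x⟧` (the latter identity is what defines the type `B` Eulerian polynomial `B_n`). -/
theorem pB_zero_eq_eulerianB (n : ℕ) :
    (pB n 0 : PowerSeries ℝ) =
      (1 - PowerSeries.X) ^ (n + 1) *
        PowerSeries.mk (fun m => ((2 * m + 1 : ℝ)) ^ n) := by
  rw [coe_pB_eq_one_sub_X_pow_mul (Nat.zero_le n), pBSeries, oddPowSeries]
  simp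
end

section
/- For every natural number n and every k ∈ {0,1,…,n+1}, the polynomial p^B_{n,n+1−k}(x) equals the reversal of p^B_{n,k}(x) with respect to degree n+1; that is, p^B_{n,n+1−k}(x) = x^{n+1} p^B_{n,k}(1/x), i.e., for every j ∈ {0,1,…,n+1} the coefficient of x^j in p^B_{n,n+1−k}(x) equals the coefficient of x^{n+1−j} in p^B_{n,k}(x). -/
open Polynomial PowerSeries

/-!
Write `A_{n,k} = ∑_{i<k} p^B_{n,i}`, so that `p^B_{n+1,0} = A_{n,n+2}`,
`p^B_{n+1,n+2} = x A_{n,n+2}` and `p^B_{n+1,k} = 2(x A_{n,k} + A_{n,n+2} - A_{n,k})` in between.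
If row `n` is symmetric under reflection in degree `n+1`, then reflecting a partial sum gives the
complementary one, `x^{n+1} A_{n,k}(1/x) = A_{n,n+2} - A_{n,n+2-k}`; in particular the row sum
`A_{n,n+2}` is palindromic. Substituting this into the recursion exchanges the formulas for
`p^B_{n+1,k}` and `p^B_{n+1,n+2-k}`, which is the induction step.
-/

namespace Polynomial

variable {R : Type*} [Semiring R]

lemma reflect_succ_X_mul {p : R[X]} {N : ℕ} (hp : p.natDegree ≤ N) :
    reflect (N + 1) (X * p) = reflect N p := by
  rw [add_comm N, reflect_mul X p natDegree_X_le hp, reflect_one_X, one_mul]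

lemma reflect_succ_eq_X_mul {p : R[X]} {N : ℕ} (hp : p.natDegree ≤ N) :
    reflect (N + 1) p = X * reflect N p := by
  have h := reflect_mul (1 : R[X]) p (F := 1) (natDegree_one.trans_le zero_le_one) hp
  rwa [one_mul, reflect_one, pow_one, add_comm] at h

lemma reflect_sum_range_add_sum_range {N : ℕ} {f : ℕ → R[X]}
    (hf : ∀ i ≤ N, reflect N (f i) = f (N - i)) {k : ℕ} (hk : k ≤ N + 1) :
    reflect N (∑ i ∈ Finset.range k, f i) + ∑ i ∈ Finset.range (N + 1 - k), f i =
      ∑ i ∈ Finset.range (N + 1), f i := by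
  induction k with
  | zero => simp
  | succ k ih =>
    have hsplit : N + 1 - k = (N - k) + 1 := by omega
    rw [← ih (by omega), hsplit, Finset.sum_range_succ, Finset.sum_range_succ, reflect_add,
      hf k (by omega), show N + 1 - (k + 1) = N - k by omega]
    abel

end Polynomial

noncomputable def pBSum (n k : ℕ) : ℝ[X] := ∑ i ∈ Finset.range k, pB n i

lemma pB_zero_zero : pB 0 0 = 1 := by rw [pB]

lemma pB_zero_one : pB 0 1 = Polynomial.X := by rw [pB]

lemma pB_eq_zero_of_lt {n k : ℕ} (h : n + 1 < k) : pB n k = 0 := by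
  match n, k, h with
  | 0, _ + 2, _ => rw [pB]
  | _ + 1, _ + 1, h => rw [pB, if_neg (by omega), if_neg (by omega)]

lemma pB_succ_zero_s4 (n : ℕ) : pB (n + 1) 0 = pBSum n (n + 2) := by rw [pB, pBSum]

lemma pB_succ_of_le {n k : ℕ} (h₁ : 1 ≤ k) (h₂ : k ≤ n + 1) :
    pB (n + 1) k =
      Polynomial.C 2 * (Polynomial.X * pBSum n k + (pBSum n (n + 2) - pBSum n k)) := by
  obtain ⟨k, rfl⟩ : ∃ m, k = m + 1 := ⟨k - 1, by omega⟩
  rw [pB, if_pos h₂, pBSum, pBSum,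
    ← Finset.sum_range_add_sum_Ico _ (show k + 1 ≤ n + 2 by omega),
    ← Finset.Ico_add_one_right_eq_Icc, Polynomial.C_ofNat]
  simp only [show n + 1 + 1 = n + 2 from rfl, add_sub_cancel_left]
  ring

lemma pB_succ_add_two (n : ℕ) : pB (n + 1) (n + 2) = Polynomial.X * pBSum n (n + 2) := by
  rw [show n + 2 = (n + 1) + 1 from rfl, pB, if_neg (by omega), if_pos rfl, pBSum]

lemma natDegree_pB_le (n k : ℕ) : (pB n k).natDegree ≤ n + 1 := by
  induction n generalizing k with
  | zero =>
    match k with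
    | 0 => rw [pB_zero_zero, natDegree_one]; exact zero_le_one
    | 1 => rw [pB_zero_one]; exact natDegree_X_le
    | _ + 2 => rw [pB_eq_zero_of_lt (by omega), natDegree_zero]; exact zero_le_one
  | succ n ih =>
    have hS : ∀ m, (pBSum n m).natDegree ≤ n + 1 := fun m =>
      natDegree_sum_le_of_forall_le _ _ fun i _ => ih i
    have hXS : ∀ m, (Polynomial.X * pBSum n m).natDegree ≤ n + 1 + 1 := fun m =>
      (natDegree_mul_le_of_le natDegree_X_le (hS m)).trans_eq (add_comm _ _)
    rcases Nat.eq_zero_or_pos k with rfl | hk₀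
    · rw [pB_succ_zero_s4]
      exact (hS _).trans (Nat.le_succ _)
    rcases lt_trichotomy k (n + 2) with hk | rfl | hk
    · rw [pB_succ_of_le hk₀ (by omega)]
      refine (natDegree_C_mul_le _ _).trans (natDegree_add_le_of_degree_le (hXS k) ?_)
      exact (natDegree_sub_le_of_le (hS _) (hS k)).trans (by omega)
    · rw [pB_succ_add_two]
      exact hXS _
    · rw [pB_eq_zero_of_lt hk, natDegree_zero]
      exact Nat.zero_le _

lemma natDegree_pBSum_le (n k : ℕ) : (pBSum n k).natDegree ≤ n + 1 :=
  natDegree_sum_le_of_forall_le _ _ fun i _ => natDegree_pB_le n i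

lemma reflect_pB (n k : ℕ) (hk : k ≤ n + 1) : reflect (n + 1) (pB n k) = pB n (n + 1 - k) := by
  induction n generalizing k with
  | zero =>
    interval_cases k
    · simp [pB_zero_zero, pB_zero_one, reflect_one]
    · simp [pB_zero_zero, pB_zero_one]
  | succ n ih =>
    have hdeg := natDegree_pBSum_le n
    have hpart : ∀ k ≤ n + 2,
        reflect (n + 1) (pBSum n k) = pBSum n (n + 2) - pBSum n (n + 2 - k) := fun k hk =>
      eq_sub_of_add_eq (reflect_sum_range_add_sum_range ih hk)
    have hrow : reflect (n + 1) (pBSum n (n + 2)) = pBSum n (n + 2) := by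
      rw [hpart _ le_rfl, Nat.sub_self, sub_eq_self]
      exact Finset.sum_range_zero _
    show reflect (n + 2) (pB (n + 1) k) = pB (n + 1) (n + 2 - k)
    rcases Nat.eq_zero_or_pos k with rfl | hk₀
    · rw [Nat.sub_zero, pB_succ_zero_s4, reflect_succ_eq_X_mul (hdeg _), hrow, pB_succ_add_two]
    rcases eq_or_lt_of_le hk with rfl | hk
    · rw [Nat.sub_self, pB_succ_add_two, reflect_succ_X_mul (hdeg _), hrow, pB_succ_zero_s4]
    have hsub : (pBSum n (n + 2) - pBSum n k).natDegree ≤ n + 1 :=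
      (natDegree_sub_le_of_le (hdeg _) (hdeg _)).trans_eq (max_self _)
    rw [pB_succ_of_le hk₀ (by omega), pB_succ_of_le (by omega) (by omega), reflect_C_mul,
      reflect_add, reflect_succ_X_mul (hdeg _), reflect_succ_eq_X_mul hsub, reflect_sub, hrow,
      hpart k (by omega)]
    ring

/-- `p^B_{n,n+1-k}(x) = x^{n+1} p^B_{n,k}(1/x)`: for every `j ∈ {0,…,n+1}` the coefficient
of `x^j` in `p^B_{n,n+1-k}` equals the coefficient of `x^{n+1-j}` in `p^B_{n,k}`. -/
theorem pB_reversal (n k : ℕ) (hk : k ≤ n + 1) (j : ℕ) (hj : j ≤ n + 1) :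
    (pB n (n + 1 - k)).coeff j = (pB n k).coeff (n + 1 - j) := by
  rw [← reflect_pB n k hk, coeff_reflect, revAt_le hj]
end
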